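/- arXiv:1409.1860 — 2 statements merged into one kernel-verified Lean document; each statement's English description precedes it below -/
import Mathlib

section
/- Let p ∈ (1,∞), γ < 1 - 1/p, and let f : ℝ → ℝ satisfy x ↦ f(x)⟨x⟩^γ ∈ L^p(ℝ). Define u(x) = ∫₀ˣ f(y) dy. Then there is a constant C (depending only on p and γ) such that ‖u·⟨x⟩^{γ-1}‖_{L^p} ≤ C‖f·⟨x⟩^γ‖_{L^p}. -/
/-!
By the reflection `x ↦ -x` it suffices to integrate over `x > 0`. Fix `γ < s < 1 - 1/p` and let
`q` be the conjugate exponent. Hölder's inequality with the weight `⟨y⟩^s` gives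
`|u x|^p ≤ (∫₀ˣ |f|^p ⟨y⟩^(sp)) (∫₀ˣ ⟨y⟩^(-sq))^(p/q)`, and `-sq > -1` makes the last integral
`O(⟨x⟩^(1-sq))`. Multiplying by `⟨x⟩^((γ-1)p)`, integrating and exchanging the order of
integration leaves `∫₀^∞ |f y|^p ⟨y⟩^(sp) ∫_y^∞ ⟨x⟩^((γ-s)p-1) dx dy`, whose inner integral is
`O(⟨y⟩^((γ-s)p))` since `(γ-s)p - 1 < -1`. Both power integrals are estimated by comparing
`⟨y⟩` with `1 + y`, which lies between `⟨y⟩` and `√2 ⟨y⟩` for `y ≥ 0`.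
-/

open MeasureTheory Set
open scoped ENNReal
open ENNReal (ofReal)

namespace WeightedHardy

/-- The paper's `⟨x⟩ ^ s`, as an extended nonnegative real. -/
noncomputable def bracketPow (s x : ℝ) : ℝ≥0∞ := ofReal ((1 + x ^ 2) ^ (s / 2))

lemma bracketPow_mul (s t x : ℝ) : bracketPow s x * bracketPow t x = bracketPow (s + t) x := by
  rw [bracketPow, bracketPow, bracketPow, ← ENNReal.ofReal_mul (by positivity), add_div,
    Real.rpow_add (by positivity)]

lemma bracketPow_rpow (s x : ℝ) {r : ℝ} (hr : 0 ≤ r) :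
    bracketPow s x ^ r = bracketPow (s * r) x := by
  rw [bracketPow, bracketPow, ENNReal.ofReal_rpow_of_nonneg (by positivity) hr,
    ← Real.rpow_mul (by positivity), div_mul_eq_mul_div]

lemma bracketPow_zero (x : ℝ) : bracketPow 0 x = 1 := by simp [bracketPow]

lemma bracketPow_apply_neg (s x : ℝ) : bracketPow s (-x) = bracketPow s x := by
  simp [bracketPow]

@[fun_prop]
lemma measurable_bracketPow (s : ℝ) : Measurable (bracketPow s) := by
  unfold bracketPow; fun_prop

lemma enorm_one_add_sq_rpow (s x : ℝ) : ‖(1 + x ^ 2) ^ (s / 2)‖ₑ = bracketPow s x :=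
  Real.enorm_eq_ofReal (by positivity)

lemma rpow_le_two_rpow_abs {r : ℝ} (h1 : 2⁻¹ ≤ r) (h2 : r ≤ 2) (t : ℝ) : r ^ t ≤ 2 ^ |t| := by
  rcases le_total 1 r with hr | hr
  · exact (Real.rpow_le_rpow_of_exponent_le hr (le_abs_self t)).trans
      (Real.rpow_le_rpow (by linarith) h2 (abs_nonneg t))
  · have hr0 : 0 < r := by linarith
    calc r ^ t ≤ r ^ (-|t|) := Real.rpow_le_rpow_of_exponent_ge hr0 hr (neg_abs_le t)
      _ = r⁻¹ ^ |t| := by rw [Real.rpow_neg hr0.le, Real.inv_rpow hr0.le]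
      _ ≤ 2 ^ |t| := Real.rpow_le_rpow (by positivity) (by rwa [inv_le_comm₀ hr0 two_pos])
          (abs_nonneg t)

lemma rpow_le_two_rpow_abs_mul {a b : ℝ} (ha : 0 < a) (hb : 0 < b) (hab : a ≤ 2 * b)
    (hba : b ≤ 2 * a) (t : ℝ) : a ^ t ≤ 2 ^ |t| * b ^ t := by
  calc a ^ t = (a / b) ^ t * b ^ t := by
        rw [← Real.mul_rpow (div_pos ha hb).le hb.le, div_mul_cancel₀ _ hb.ne']
    _ ≤ 2 ^ |t| * b ^ t := by
        gcongr
        apply rpow_le_two_rpow_abs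
        · rw [le_div_iff₀ hb]; linarith
        · rw [div_le_iff₀ hb]; linarith

lemma sq_rpow_half {a : ℝ} (ha : 0 ≤ a) (s : ℝ) : (a ^ 2) ^ (s / 2) = a ^ s := by
  rw [← Real.rpow_natCast, ← Real.rpow_mul ha, Nat.cast_ofNat, mul_div_cancel₀ _ two_ne_zero]

lemma bracketPow_le_ofReal_mul_one_add_rpow (s : ℝ) {y : ℝ} (hy : 0 ≤ y) :
    bracketPow s y ≤ ofReal (2 ^ |s / 2|) * ofReal ((1 + y) ^ s) := by
  rw [← ENNReal.ofReal_mul (by positivity), bracketPow]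
  refine ENNReal.ofReal_le_ofReal ((rpow_le_two_rpow_abs_mul (b := (1 + y) ^ 2) (by positivity)
    (by positivity) (by nlinarith) (by nlinarith [sq_nonneg (1 - y)]) (s / 2)).trans_eq ?_)
  rw [sq_rpow_half (by linarith)]

lemma ofReal_one_add_rpow_le_mul_bracketPow (s : ℝ) {y : ℝ} (hy : 0 ≤ y) :
    ofReal ((1 + y) ^ s) ≤ ofReal (2 ^ |s / 2|) * bracketPow s y := by
  rw [bracketPow, ← ENNReal.ofReal_mul (by positivity)]
  refine ENNReal.ofReal_le_ofReal ((le_of_eq ?_).trans (rpow_le_two_rpow_abs_mul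
    (a := (1 + y) ^ 2) (by positivity) (by positivity) (by nlinarith [sq_nonneg (1 - y)])
    (by nlinarith) (s / 2)))
  rw [sq_rpow_half (by linarith)]

lemma lintegral_Ioc_one_add_rpow {c : ℝ} (hc : -1 < c) {x : ℝ} (hx : 0 ≤ x) :
    ∫⁻ y in Ioc 0 x, ofReal ((1 + y) ^ c)
      = ofReal (((1 + x) ^ (c + 1) - 1) / (c + 1)) := by
  have hint : IntervalIntegrable (fun y : ℝ => (1 + y) ^ c) volume 0 x := by
    simpa using (intervalIntegral.intervalIntegrable_rpow' hc (a := 1) (b := 1 + x)).comp_add_left 1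
  rw [← ofReal_integral_eq_lintegral_ofReal
      ((intervalIntegrable_iff_integrableOn_Ioc_of_le hx).1 hint)
      ((ae_restrict_mem measurableSet_Ioc).mono fun y hy =>
        Real.rpow_nonneg (by linarith [hy.1]) c),
    ← intervalIntegral.integral_of_le hx, intervalIntegral.integral_comp_add_left (· ^ c),
    integral_rpow (Or.inl hc)]
  simp

lemma lintegral_Ioi_one_add_rpow {d : ℝ} (hd : d < -1) {y : ℝ} (hy : 0 ≤ y) :
    ∫⁻ x in Ioi y, ofReal ((1 + x) ^ d) = ofReal ((1 + y) ^ (d + 1) / -(d + 1)) := by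
  have hy' : 0 < 1 + y := by linarith
  have hshift := (measurePreserving_add_left volume (1 : ℝ)).setLIntegral_comp_preimage_emb
      (measurableEmbedding_addLeft 1) (fun x => ofReal (x ^ d)) (Ioi (1 + y))
  rw [preimage_const_add_Ioi, add_sub_cancel_left] at hshift
  rw [hshift, ← ofReal_integral_eq_lintegral_ofReal (integrableOn_Ioi_rpow_of_lt hd hy')
      ((ae_restrict_mem measurableSet_Ioi).mono fun x hx => Real.rpow_nonneg (hy'.trans hx).le d),
    integral_Ioi_rpow_of_lt hd hy', neg_div, div_neg]

lemma lintegral_Ioc_bracketPow_le {c : ℝ} (hc : -1 < c) : ∃ K : ℝ, 0 < K ∧ ∀ x : ℝ, 0 ≤ x →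
    ∫⁻ y in Ioc 0 x, bracketPow c y ≤ ofReal K * bracketPow (c + 1) x := by
  have hc' : 0 < c + 1 := by linarith
  refine ⟨2 ^ |c / 2| * 2 ^ |(c + 1) / 2| * (c + 1)⁻¹, by positivity, fun x hx => ?_⟩
  calc ∫⁻ y in Ioc 0 x, bracketPow c y
      ≤ ∫⁻ y in Ioc 0 x, ofReal (2 ^ |c / 2|) * ofReal ((1 + y) ^ c) :=
        setLIntegral_mono' measurableSet_Ioc fun y hy =>
          bracketPow_le_ofReal_mul_one_add_rpow c hy.1.le
    _ = ofReal (2 ^ |c / 2|) * ofReal (((1 + x) ^ (c + 1) - 1) / (c + 1)) := by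
        rw [lintegral_const_mul' _ _ ENNReal.ofReal_ne_top, lintegral_Ioc_one_add_rpow hc hx]
    _ ≤ ofReal (2 ^ |c / 2|) * (ofReal ((1 + x) ^ (c + 1)) * ofReal (c + 1)⁻¹) := by
        gcongr
        rw [← ENNReal.ofReal_mul (by positivity), ← div_eq_mul_inv]
        gcongr
        linarith
    _ ≤ ofReal (2 ^ |c / 2|) *
          ((ofReal (2 ^ |(c + 1) / 2|) * bracketPow (c + 1) x) * ofReal (c + 1)⁻¹) := by
        gcongr
        exact ofReal_one_add_rpow_le_mul_bracketPow _ hx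
    _ = ofReal (2 ^ |c / 2| * 2 ^ |(c + 1) / 2| * (c + 1)⁻¹) * bracketPow (c + 1) x := by
        rw [ENNReal.ofReal_mul (by positivity), ENNReal.ofReal_mul (by positivity)]
        ring

lemma lintegral_Ici_bracketPow_le {d : ℝ} (hd : d < -1) : ∃ K : ℝ, 0 < K ∧ ∀ y : ℝ, 0 ≤ y →
    ∫⁻ x in Ici y, bracketPow d x ≤ ofReal K * bracketPow (d + 1) y := by
  have hd' : 0 < -(d + 1) := by linarith
  refine ⟨2 ^ |d / 2| * 2 ^ |(d + 1) / 2| * (-(d + 1))⁻¹, by positivity, fun y hy => ?_⟩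
  calc ∫⁻ x in Ici y, bracketPow d x
      = ∫⁻ x in Ioi y, bracketPow d x := setLIntegral_congr Ioi_ae_eq_Ici.symm
    _ ≤ ∫⁻ x in Ioi y, ofReal (2 ^ |d / 2|) * ofReal ((1 + x) ^ d) :=
        setLIntegral_mono' measurableSet_Ioi fun x hx =>
          bracketPow_le_ofReal_mul_one_add_rpow d (hy.trans hx.le)
    _ = ofReal (2 ^ |d / 2|) *
          (ofReal ((1 + y) ^ (d + 1)) * ofReal (-(d + 1))⁻¹) := by
        rw [lintegral_const_mul' _ _ ENNReal.ofReal_ne_top, lintegral_Ioi_one_add_rpow hd hy,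
          div_eq_mul_inv ((1 + y) ^ (d + 1)), ENNReal.ofReal_mul (by positivity)]
    _ ≤ ofReal (2 ^ |d / 2|) *
          ((ofReal (2 ^ |(d + 1) / 2|) * bracketPow (d + 1) y) * ofReal (-(d + 1))⁻¹) := by
        gcongr
        exact ofReal_one_add_rpow_le_mul_bracketPow _ hy
    _ = ofReal (2 ^ |d / 2| * 2 ^ |(d + 1) / 2| * (-(d + 1))⁻¹) * bracketPow (d + 1) y := by
        rw [ENNReal.ofReal_mul (by positivity), ENNReal.ofReal_mul (by positivity)]
        ring

lemma lintegral_Ioi_mul_lintegral_Ioc {V H : ℝ → ℝ≥0∞} (hV : Measurable V) (hH : Measurable H) :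
    ∫⁻ x in Ioi 0, V x * ∫⁻ y in Ioc 0 x, H y = ∫⁻ y in Ioi 0, H y * ∫⁻ x in Ici y, V x := by
  set S : Set (ℝ × ℝ) := {z | 0 < z.2 ∧ z.2 ≤ z.1}
  have hS : MeasurableSet S :=
    (measurableSet_lt measurable_const measurable_snd).inter
      (measurableSet_le measurable_snd measurable_fst)
  set F : ℝ → ℝ → ℝ≥0∞ := fun x y => S.indicator (fun z => V z.1 * H z.2) (x, y)
  have hF : Measurable (Function.uncurry F) := (by fun_prop : Measurable _).indicator hS
  calc ∫⁻ x in Ioi 0, V x * ∫⁻ y in Ioc 0 x, H y = ∫⁻ x, ∫⁻ y, F x y := by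
        rw [← lintegral_indicator measurableSet_Ioi]
        refine lintegral_congr fun x => ?_
        by_cases hx : x ∈ Ioi 0
        · rw [indicator_of_mem hx, ← lintegral_const_mul _ hH,
            ← lintegral_indicator measurableSet_Ioc]
          refine lintegral_congr fun y => ?_
          simp [F, S, indicator]
        · have hF0 : ∀ y, F x y = 0 := fun y =>
            indicator_of_notMem (fun h => hx (h.1.trans_le h.2)) _
          simp [indicator_of_notMem hx, hF0]
    _ = ∫⁻ y, ∫⁻ x, F x y := lintegral_lintegral_swap hF.aemeasurable
    _ = ∫⁻ y in Ioi 0, H y * ∫⁻ x in Ici y, V x := by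
        rw [← lintegral_indicator measurableSet_Ioi]
        refine lintegral_congr fun y => ?_
        by_cases hy : y ∈ Ioi 0
        · rw [indicator_of_mem hy, ← lintegral_const_mul _ hV,
            ← lintegral_indicator measurableSet_Ici]
          refine lintegral_congr fun x => ?_
          simp [F, S, indicator, mem_Ioi.1 hy, mul_comm]
        · have hF0 : ∀ x, F x y = 0 := fun x => indicator_of_notMem (fun h => hy h.1) _
          simp [indicator_of_notMem hy, hF0]

lemma enorm_integral_le_bracketPow_holder (μ : Measure ℝ) {p q : ℝ} (hpq : p.HolderConjugate q)
    (s : ℝ) {g : ℝ → ℝ} (hg : Measurable g) :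
    ‖∫ y, g y ∂μ‖ₑ ≤ (∫⁻ y, (‖g y‖ₑ * bracketPow s y) ^ p ∂μ) ^ (1 / p)
      * (∫⁻ y, bracketPow (-s * q) y ∂μ) ^ (1 / q) := by
  calc ‖∫ y, g y ∂μ‖ₑ ≤ ∫⁻ y, ‖g y‖ₑ ∂μ := enorm_integral_le_lintegral_enorm _
    _ = ∫⁻ y, (‖g y‖ₑ * bracketPow s y) * bracketPow (-s) y ∂μ := by
        simp_rw [mul_assoc, bracketPow_mul, add_neg_cancel, bracketPow_zero, mul_one]
    _ ≤ (∫⁻ y, (‖g y‖ₑ * bracketPow s y) ^ p ∂μ) ^ (1 / p)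
          * (∫⁻ y, bracketPow (-s) y ^ q ∂μ) ^ (1 / q) :=
        ENNReal.lintegral_mul_le_Lp_mul_Lq μ hpq (f := fun y => ‖g y‖ₑ * bracketPow s y)
          (g := bracketPow (-s)) (by fun_prop) (by fun_prop)
    _ = _ := by simp_rw [bracketPow_rpow _ _ hpq.symm.nonneg]

lemma rpow_enorm_intervalIntegral_mul_bracketPow_le {p q : ℝ} (hpq : p.HolderConjugate q)
    {γ s K x : ℝ} (hK : 0 ≤ K) (hx : 0 ≤ x) (hfront : ∫⁻ y in Ioc 0 x, bracketPow (-s * q) y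
      ≤ ofReal K * bracketPow (-s * q + 1) x) {g : ℝ → ℝ} (hg : Measurable g) :
    (‖∫ y in 0..x, g y‖ₑ * bracketPow (γ - 1) x) ^ p
      ≤ ofReal (K ^ (p / q)) * (bracketPow ((γ - s) * p - 1) x
        * ∫⁻ y in Ioc 0 x, (‖g y‖ₑ * bracketPow s y) ^ p) := by
  set A := ∫⁻ y in Ioc 0 x, (‖g y‖ₑ * bracketPow s y) ^ p
  have hp := hpq.pos
  have hq := hpq.symm.pos
  have hexp : (-s * q + 1) * (p / q) + (γ - 1) * p = (γ - s) * p - 1 := by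
    rw [hpq.div_conj_eq_sub_one]
    linear_combination (-s) * hpq.sub_one_mul_conj
  have holder := enorm_integral_le_bracketPow_holder (volume.restrict (Ioc 0 x)) hpq s hg
  rw [← intervalIntegral.integral_of_le hx] at holder
  calc (‖∫ y in 0..x, g y‖ₑ * bracketPow (γ - 1) x) ^ p
      ≤ (A ^ (1 / p) * (ofReal K * bracketPow (-s * q + 1) x) ^ (1 / q)
          * bracketPow (γ - 1) x) ^ p := by
        gcongr
        exact holder.trans (by gcongr)
    _ = ofReal (K ^ (p / q)) * (bracketPow ((γ - s) * p - 1) x * A) := by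
        rw [ENNReal.mul_rpow_of_nonneg _ _ hp.le, ENNReal.mul_rpow_of_nonneg _ _ hp.le,
          ← ENNReal.rpow_mul, ← ENNReal.rpow_mul, one_div, inv_mul_cancel₀ hp.ne',
          ENNReal.rpow_one, ENNReal.mul_rpow_of_nonneg _ _ (by positivity),
          ENNReal.ofReal_rpow_of_nonneg hK (by positivity),
          bracketPow_rpow _ _ (by positivity), bracketPow_rpow _ _ hp.le, one_div_mul_eq_div,
          ← hexp, ← bracketPow_mul]
        ring

lemma mul_bracketPow_rpow_mul (a : ℝ≥0∞) {p : ℝ} (hp : 0 ≤ p) (s t y : ℝ) :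
    (a * bracketPow s y) ^ p * bracketPow (t * p) y = (a * bracketPow (s + t) y) ^ p := by
  rw [← bracketPow_rpow _ _ hp, ← ENNReal.mul_rpow_of_nonneg _ _ hp, mul_assoc, bracketPow_mul]

theorem lintegral_Ioi_hardy_le {p γ : ℝ} (hp : 1 < p) (hγ : γ < 1 - 1 / p) :
    ∃ C : ℝ, 0 < C ∧ ∀ g : ℝ → ℝ, Measurable g →
      ∫⁻ x in Ioi 0, (‖∫ y in 0..x, g y‖ₑ * bracketPow (γ - 1) x) ^ p
        ≤ ofReal C * ∫⁻ y in Ioi 0, (‖g y‖ₑ * bracketPow γ y) ^ p := by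
  set q := p.conjExponent
  have hpq : p.HolderConjugate q := .conjExponent hp
  set s := (γ + (1 - 1 / p)) / 2 with hs
  have hc : -1 < -s * q := by
    have : s * q < 1 := by
      rw [← lt_div_iff₀ hpq.symm.pos]
      linarith [hpq.inv_add_inv_eq_one, one_div p, one_div q]
    linarith
  have hd : (γ - s) * p - 1 < -1 := by
    linarith [mul_neg_of_neg_of_pos (by linarith : γ - s < 0) hpq.pos]
  obtain ⟨K₁, hK₁, hfront⟩ := lintegral_Ioc_bracketPow_le hc
  obtain ⟨K₂, hK₂, htail⟩ := lintegral_Ici_bracketPow_le hd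
  refine ⟨K₁ ^ (p / q) * K₂, by positivity, fun g hg => ?_⟩
  set H := fun y => (‖g y‖ₑ * bracketPow s y) ^ p
  calc ∫⁻ x in Ioi 0, (‖∫ y in 0..x, g y‖ₑ * bracketPow (γ - 1) x) ^ p
      ≤ ∫⁻ x in Ioi 0, ofReal (K₁ ^ (p / q))
          * (bracketPow ((γ - s) * p - 1) x * ∫⁻ y in Ioc 0 x, H y) :=
        setLIntegral_mono' measurableSet_Ioi fun x hx =>
          rpow_enorm_intervalIntegral_mul_bracketPow_le hpq hK₁.le hx.le (hfront x hx.le) hg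
    _ = ofReal (K₁ ^ (p / q))
          * ∫⁻ y in Ioi 0, H y * ∫⁻ x in Ici y, bracketPow ((γ - s) * p - 1) x := by
        rw [lintegral_const_mul' _ _ ENNReal.ofReal_ne_top,
          lintegral_Ioi_mul_lintegral_Ioc (by fun_prop) (by fun_prop)]
    _ ≤ ofReal (K₁ ^ (p / q))
          * ∫⁻ y in Ioi 0, H y * (ofReal K₂ * bracketPow ((γ - s) * p) y) := by
        refine mul_le_mul_right (setLIntegral_mono' measurableSet_Ioi fun y hy => ?_) _
        gcongr
        exact (htail y (le_of_lt hy)).trans_eq (by rw [sub_add_cancel])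
    _ = ofReal (K₁ ^ (p / q) * K₂) * ∫⁻ y in Ioi 0, (‖g y‖ₑ * bracketPow γ y) ^ p := by
        simp_rw [H, mul_left_comm _ (ofReal K₂), mul_bracketPow_rpow_mul _ hpq.nonneg,
          add_sub_cancel]
        rw [lintegral_const_mul' _ _ ENNReal.ofReal_ne_top, ← mul_assoc,
          ENNReal.ofReal_mul (by positivity)]

lemma lintegral_eq_lintegral_Ioi_add_lintegral_Ioi_neg (F : ℝ → ℝ≥0∞) :
    ∫⁻ x, F x = (∫⁻ x in Ioi 0, F x) + ∫⁻ x in Ioi 0, F (-x) := by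
  have hflip := (Measure.measurePreserving_neg (volume : Measure ℝ)).setLIntegral_comp_preimage_emb
    measurableEmbedding_neg F (Iic 0)
  rw [neg_preimage, neg_Iic, neg_zero] at hflip
  rw [← lintegral_add_compl F measurableSet_Ioi, compl_Ioi, ← hflip,
    Measure.restrict_congr_set Ioi_ae_eq_Ici]

lemma enorm_intervalIntegral_neg (f : ℝ → ℝ) (x : ℝ) :
    ‖∫ y in 0..-x, f y‖ₑ = ‖∫ y in 0..x, f (-y)‖ₑ := by
  rw [intervalIntegral.integral_comp_neg, neg_zero, intervalIntegral.integral_symm, enorm_neg]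

theorem lintegral_hardy_le {p γ : ℝ} (hp : 1 < p) (hγ : γ < 1 - 1 / p) :
    ∃ C : ℝ, 0 < C ∧ ∀ f : ℝ → ℝ, Measurable f →
      ∫⁻ x, (‖∫ y in 0..x, f y‖ₑ * bracketPow (γ - 1) x) ^ p
        ≤ ofReal C * ∫⁻ y, (‖f y‖ₑ * bracketPow γ y) ^ p := by
  obtain ⟨C, hC, hhalf⟩ := lintegral_Ioi_hardy_le hp hγ
  refine ⟨C, hC, fun f hf => ?_⟩
  rw [lintegral_eq_lintegral_Ioi_add_lintegral_Ioi_neg,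
    lintegral_eq_lintegral_Ioi_add_lintegral_Ioi_neg, mul_add]
  simp_rw [enorm_intervalIntegral_neg, bracketPow_apply_neg]
  exact add_le_add (hhalf f hf) (hhalf (fun y => f (-y)) (hf.comp measurable_neg))

end WeightedHardy

open WeightedHardy in
/-- For γ < 1 - 1/p, u(x) = ∫₀ˣ f satisfies ‖u ⟨x⟩^(γ-1)‖_{L^p} ≤ C ‖f ⟨x⟩^γ‖_{L^p}. -/
theorem stmt8 (p γ : ℝ) (hp : 1 < p) (hγ : γ < 1 - 1 / p) :
    ∃ C : ℝ, 0 < C ∧ ∀ f : ℝ → ℝ, Measurable f →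
      MemLp (fun x => f x * (1 + x ^ 2) ^ (γ / 2)) (ENNReal.ofReal p) volume →
      eLpNorm (fun x => (∫ y in (0 : ℝ)..x, f y) * (1 + x ^ 2) ^ ((γ - 1) / 2))
          (ENNReal.ofReal p) volume
        ≤ ENNReal.ofReal C *
          eLpNorm (fun x => f x * (1 + x ^ 2) ^ (γ / 2)) (ENNReal.ofReal p) volume := by
  obtain ⟨C, hC, hHardy⟩ := lintegral_hardy_le hp hγ
  have hp0 : 0 < p := by linarith
  refine ⟨C ^ (1 / p), by positivity, fun f hf _ => ?_⟩
  simp only [eLpNorm_eq_lintegral_rpow_enorm_toReal (ENNReal.ofReal_pos.2 hp0).ne'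
    ENNReal.ofReal_ne_top, ENNReal.toReal_ofReal hp0.le, enorm_mul, enorm_one_add_sq_rpow]
  rw [← ENNReal.ofReal_rpow_of_nonneg hC.le (by positivity),
    ← ENNReal.mul_rpow_of_nonneg _ _ (by positivity)]
  exact ENNReal.rpow_le_rpow (hHardy f hf) (by positivity)
end

section
/- Let σ > 2 and f ∈ M^{1,2}_{σ+1}(ℝ), i.e. f·⟨x⟩^{σ+1} ∈ L² and f'·⟨x⟩^{σ+2} ∈ L². Then f² ∈ L²_{σ+4}, with ‖f²·⟨x⟩^{σ+4}‖_{L²} ≤ C‖f‖²_{M^{1,2}_{σ+1}}. -/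
/-!
Put `g = f ⟨x⟩^{σ+1}`. Its derivative is `f' ⟨x⟩^{σ+1} + (σ+1) x f ⟨x⟩^{σ-1}`, and since
`|x| ≤ ⟨x⟩` both terms are dominated by `|f'| ⟨x⟩^{σ+2}` and `(σ+1) |g|`, so `g ∈ W^{1,2}(ℝ)`.
Agmon's inequality `‖g‖²_∞ ≤ 2 ‖g‖₂ ‖g'‖₂` (the fundamental theorem of calculus applied to `g²`
on `(-∞, x]`, followed by Cauchy–Schwarz) makes `g` bounded. Finally `σ ≥ 2` gives
`f² ⟨x⟩^{σ+4} ≤ g² ≤ ‖g‖_∞ |g|`, whence `‖f² ⟨x⟩^{σ+4}‖₂ ≤ ‖g‖_∞ ‖g‖₂`.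
-/

open MeasureTheory Filter Topology Set
open scoped ENNReal

section LpNorm

variable {α E F : Type*} [MeasurableSpace α] {μ : Measure α} {p q r : ℝ≥0∞}
  [NormedAddCommGroup E] [NormedAddCommGroup F]

theorem lpNorm_le_mul_lpNorm_of_le_mul {f : α → E} {g : α → F} {c : ℝ} (hc : 0 ≤ c)
    (hf : AEStronglyMeasurable f μ) (hg : MemLp g p μ) (hfg : ∀ x, ‖f x‖ ≤ c * ‖g x‖) :
    lpNorm f p μ ≤ c * lpNorm g p μ := by
  rw [← toReal_eLpNorm hf, ← toReal_eLpNorm hg.1, ← ENNReal.toReal_ofReal hc,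
    ← ENNReal.toReal_mul]
  exact ENNReal.toReal_mono (by finiteness)
    (eLpNorm_le_mul_eLpNorm_of_ae_le_mul (ae_of_all _ hfg) p)

theorem lpNorm_mul_le [p.HolderTriple q r] {f g : α → ℝ} (hf : MemLp f p μ) (hg : MemLp g q μ) :
    lpNorm (f * g) r μ ≤ lpNorm f p μ * lpNorm g q μ := by
  rw [← toReal_eLpNorm (hf.1.mul hg.1), ← toReal_eLpNorm hf.1, ← toReal_eLpNorm hg.1,
    ← ENNReal.toReal_mul]
  have hholder := eLpNorm_smul_le_mul_eLpNorm (p := p) (q := q) (r := r) hg.1 hf.1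
  exact ENNReal.toReal_mono (ENNReal.mul_ne_top hf.eLpNorm_ne_top hg.eLpNorm_ne_top) hholder

end LpNorm

theorem sq_le_two_mul_lpNorm_mul_lpNorm {h h' : ℝ → ℝ} (hderiv : ∀ x, HasDerivAt h (h' x) x)
    (hh : MemLp h 2 volume) (hh' : MemLp h' 2 volume) (x : ℝ) :
    h x ^ 2 ≤ 2 * (lpNorm h 2 volume * lpNorm h' 2 volume) := by
  have hderiv_sq : ∀ y, HasDerivAt (fun y => h y ^ 2) (2 * (h y * h' y)) y := fun y =>
    ((hderiv y).fun_pow 2).congr_deriv (by norm_num; ring)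
  have hprod : Integrable (h * h') volume := hh.integrable_mul hh'
  have hint : Integrable (fun y => 2 * (h y * h' y)) volume := hprod.const_mul 2
  have hlim : Tendsto (fun y => h y ^ 2) atBot (𝓝 0) :=
    tendsto_zero_of_hasDerivAt_of_integrableOn_Iic (a := x) (fun y _ => hderiv_sq y)
      hint.integrableOn hh.integrable_sq.integrableOn
  have hftc : ∫ y in Iic x, 2 * (h y * h' y) = h x ^ 2 := by
    simpa using integral_Iic_of_hasDerivAt_of_tendsto' (fun y _ => hderiv_sq y)
      hint.integrableOn hlim
  calc h x ^ 2 = ∫ y in Iic x, 2 * (h y * h' y) := hftc.symm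
    _ ≤ ∫ y in Iic x, ‖2 * (h y * h' y)‖ :=
        (Real.le_norm_self _).trans (norm_integral_le_integral_norm _)
    _ ≤ ∫ y, ‖2 * (h y * h' y)‖ :=
        setIntegral_le_integral hint.norm (ae_of_all _ fun _ => norm_nonneg _)
    _ = 2 * lpNorm (h * h') 1 volume := by
        rw [lpNorm_one_eq_integral_norm hprod.1, ← integral_const_mul]
        simp [norm_mul]
    _ ≤ 2 * (lpNorm h 2 volume * lpNorm h' 2 volume) := by
        gcongr
        exact lpNorm_mul_le hh hh'

theorem one_add_sq_rpow_le_rpow {r s : ℝ} (hrs : r ≤ s) (x : ℝ) :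
    (1 + x ^ 2) ^ r ≤ (1 + x ^ 2) ^ s :=
  Real.rpow_le_rpow_of_exponent_le (le_add_of_nonneg_right (sq_nonneg x)) hrs

theorem abs_le_one_add_sq_rpow_half (x : ℝ) : |x| ≤ (1 + x ^ 2) ^ (1 / 2 : ℝ) := by
  rw [← Real.sqrt_eq_rpow, ← Real.sqrt_sq_eq_abs]
  exact Real.sqrt_le_sqrt (le_add_of_nonneg_left zero_le_one)

theorem hasDerivAt_one_add_sq_rpow (r x : ℝ) :
    HasDerivAt (fun x => (1 + x ^ 2) ^ r) (2 * x * r * (1 + x ^ 2) ^ (r - 1)) x := by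
  have := ((hasDerivAt_pow 2 x).const_add 1).rpow_const (p := r) (Or.inl (by positivity))
  convert this using 1
  push_cast
  ring

theorem abs_deriv_one_add_sq_rpow_le (r x : ℝ) :
    |2 * x * r * (1 + x ^ 2) ^ (r - 1)| ≤ 2 * |r| * (1 + x ^ 2) ^ r := by
  have hw : 0 < 1 + x ^ 2 := by positivity
  calc |2 * x * r * (1 + x ^ 2) ^ (r - 1)| = 2 * |r| * (|x| * (1 + x ^ 2) ^ (r - 1)) := by
        rw [abs_mul, abs_mul, abs_mul, abs_two, abs_of_pos (Real.rpow_pos_of_pos hw _)]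
        ring
    _ ≤ 2 * |r| * ((1 + x ^ 2) ^ (1 / 2 : ℝ) * (1 + x ^ 2) ^ (r - 1)) := by
        gcongr
        exact abs_le_one_add_sq_rpow_half x
    _ = 2 * |r| * (1 + x ^ 2) ^ (r - 1 / 2) := by
        rw [← Real.rpow_add hw]
        ring_nf
    _ ≤ 2 * |r| * (1 + x ^ 2) ^ r :=
        mul_le_mul_of_nonneg_left (one_add_sq_rpow_le_rpow (by linarith) x) (by positivity)

section WeightedSobolev

variable {f : ℝ → ℝ} {a b : ℝ}

theorem abs_deriv_mul_one_add_sq_rpow_le (hf : Differentiable ℝ f) (hab : a ≤ b) (x : ℝ) :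
    |deriv (fun x => f x * (1 + x ^ 2) ^ a) x| ≤
      |deriv f x * (1 + x ^ 2) ^ b| + 2 * |a| * |f x * (1 + x ^ 2) ^ a| := by
  rw [((hf x).hasDerivAt.fun_mul (hasDerivAt_one_add_sq_rpow a x)).deriv]
  have hw : 0 < 1 + x ^ 2 := by positivity
  calc _ ≤ |deriv f x * (1 + x ^ 2) ^ a| + |f x| * |2 * x * a * (1 + x ^ 2) ^ (a - 1)| := by
        rw [← abs_mul]
        exact abs_add_le _ _
    _ ≤ |deriv f x * (1 + x ^ 2) ^ b| + |f x| * (2 * |a| * (1 + x ^ 2) ^ a) := by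
        gcongr ?_ + |f x| * ?_
        · rw [abs_mul, abs_mul, abs_of_pos (Real.rpow_pos_of_pos hw a),
            abs_of_pos (Real.rpow_pos_of_pos hw b)]
          exact mul_le_mul_of_nonneg_left (one_add_sq_rpow_le_rpow hab x) (abs_nonneg _)
        · exact abs_deriv_one_add_sq_rpow_le a x
    _ = _ := by
        rw [abs_mul (f x), abs_of_pos (Real.rpow_pos_of_pos hw a)]
        ring

theorem abs_mul_one_add_sq_rpow_le (hf : Differentiable ℝ f) (hab : a ≤ b)
    (h0 : MemLp (fun x => f x * (1 + x ^ 2) ^ a) 2 volume)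
    (h1 : MemLp (fun x => deriv f x * (1 + x ^ 2) ^ b) 2 volume) (x : ℝ) :
    |f x * (1 + x ^ 2) ^ a| ≤
      (1 + 2 * |a|) * lpNorm (fun x => f x * (1 + x ^ 2) ^ a) 2 volume +
        lpNorm (fun x => deriv f x * (1 + x ^ 2) ^ b) 2 volume := by
  set g := fun x => f x * (1 + x ^ 2) ^ a
  set g₁ := fun x => deriv f x * (1 + x ^ 2) ^ b
  have hg : Differentiable ℝ g :=
    hf.mul fun x => (hasDerivAt_one_add_sq_rpow a x).differentiableAt
  set u : ℝ → ℝ := fun x => |g₁ x| + 2 * |a| * |g x|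
  have hu : MemLp u 2 volume := h1.abs.add (h0.abs.const_mul _)
  have hdu : ∀ x, ‖deriv g x‖ ≤ u x := abs_deriv_mul_one_add_sq_rpow_le hf hab
  have hdg : MemLp (deriv g) 2 volume :=
    hu.of_le (measurable_deriv g).aestronglyMeasurable
      (ae_of_all _ fun x => (hdu x).trans (le_abs_self _))
  have hdg_norm : lpNorm (deriv g) 2 volume ≤
      lpNorm g₁ 2 volume + 2 * |a| * lpNorm g 2 volume := calc
    _ ≤ lpNorm u 2 volume := lpNorm_mono_real hu hdu
    _ ≤ lpNorm (fun x => |g₁ x|) 2 volume + lpNorm (fun x => 2 * |a| * |g x|) 2 volume :=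
        lpNorm_add_le h1.abs one_le_two
    _ ≤ _ := by
        gcongr
        · rw [lpNorm_fun_abs h1.1]
        · exact lpNorm_le_mul_lpNorm_of_le_mul (by positivity) (h0.abs.const_mul _).1 h0
            fun x => by simp
  have hagmon := sq_le_two_mul_lpNorm_mul_lpNorm (fun x => (hg x).hasDerivAt) h0 hdg x
  have hA : 0 ≤ lpNorm g 2 volume := lpNorm_nonneg
  have hB : 0 ≤ lpNorm g₁ 2 volume := lpNorm_nonneg
  refine abs_le_of_sq_le_sq (hagmon.trans ?_) (by positivity)
  nlinarith [mul_le_mul_of_nonneg_left hdg_norm hA, abs_nonneg a, mul_nonneg hA hB,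
    sq_nonneg (lpNorm g₁ 2 volume + 2 * |a| * lpNorm g 2 volume)]

theorem sq_mul_one_add_sq_rpow_memLp_and_lpNorm_le (hf : Differentiable ℝ f) (hab : a ≤ b)
    {c : ℝ} (hca : c ≤ 2 * a) (h0 : MemLp (fun x => f x * (1 + x ^ 2) ^ a) 2 volume)
    (h1 : MemLp (fun x => deriv f x * (1 + x ^ 2) ^ b) 2 volume) :
    MemLp (fun x => f x ^ 2 * (1 + x ^ 2) ^ c) 2 volume ∧
      lpNorm (fun x => f x ^ 2 * (1 + x ^ 2) ^ c) 2 volume ≤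
        ((1 + 2 * |a|) * lpNorm (fun x => f x * (1 + x ^ 2) ^ a) 2 volume +
          lpNorm (fun x => deriv f x * (1 + x ^ 2) ^ b) 2 volume) *
          lpNorm (fun x => f x * (1 + x ^ 2) ^ a) 2 volume := by
  set M := (1 + 2 * |a|) * lpNorm (fun x => f x * (1 + x ^ 2) ^ a) 2 volume +
    lpNorm (fun x => deriv f x * (1 + x ^ 2) ^ b) 2 volume
  have hT : ∀ x, ‖f x ^ 2 * (1 + x ^ 2) ^ c‖ ≤ M * ‖f x * (1 + x ^ 2) ^ a‖ := fun x => by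
    have hw : 0 < 1 + x ^ 2 := by positivity
    calc ‖f x ^ 2 * (1 + x ^ 2) ^ c‖ = f x ^ 2 * (1 + x ^ 2) ^ c :=
          Real.norm_of_nonneg (by positivity)
      _ ≤ f x ^ 2 * (1 + x ^ 2) ^ (a * 2) :=
          mul_le_mul_of_nonneg_left (one_add_sq_rpow_le_rpow (by linarith) x) (sq_nonneg _)
      _ = |f x * (1 + x ^ 2) ^ a| * |f x * (1 + x ^ 2) ^ a| := by
          rw [abs_mul_abs_self, mul_two, Real.rpow_add hw]
          ring
      _ ≤ M * ‖f x * (1 + x ^ 2) ^ a‖ :=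
          mul_le_mul_of_nonneg_right (abs_mul_one_add_sq_rpow_le hf hab h0 h1 x) (abs_nonneg _)
  have hTmeas : AEStronglyMeasurable (fun x => f x ^ 2 * (1 + x ^ 2) ^ c) volume := by
    have := hf.continuous.measurable
    fun_prop
  have hM : 0 ≤ M := add_nonneg (mul_nonneg (by positivity) lpNorm_nonneg) lpNorm_nonneg
  exact ⟨h0.of_le_mul hTmeas (ae_of_all _ hT), lpNorm_le_mul_lpNorm_of_le_mul hM hTmeas h0 hT⟩

end WeightedSobolev

/-- For σ > 2 and f ∈ M^{1,2}_{σ+1}, f² ∈ L²_{σ+4} with a quadratic bound. -/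
theorem stmt14 (σ : ℝ) (hσ : 2 < σ) :
    ∃ C : ℝ, 0 < C ∧ ∀ f : ℝ → ℝ, Differentiable ℝ f →
      MemLp (fun x => f x * (1 + x ^ 2) ^ ((σ + 1) / 2)) 2 volume →
      MemLp (fun x => deriv f x * (1 + x ^ 2) ^ ((σ + 2) / 2)) 2 volume →
      MemLp (fun x => (f x) ^ 2 * (1 + x ^ 2) ^ ((σ + 4) / 2)) 2 volume ∧
      (eLpNorm (fun x => (f x) ^ 2 * (1 + x ^ 2) ^ ((σ + 4) / 2)) 2 volume).toReal ≤
        C * ((eLpNorm (fun x => f x * (1 + x ^ 2) ^ ((σ + 1) / 2)) 2 volume).toReal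
           + (eLpNorm (fun x => deriv f x * (1 + x ^ 2) ^ ((σ + 2) / 2)) 2 volume).toReal) ^ 2 := by
  refine ⟨σ + 2, by linarith, fun f hf h0 h1 => ?_⟩
  obtain ⟨hT, hTnorm⟩ := sq_mul_one_add_sq_rpow_memLp_and_lpNorm_le (c := (σ + 4) / 2) hf
    (by linarith : (σ + 1) / 2 ≤ (σ + 2) / 2) (by linarith) h0 h1
  refine ⟨hT, ?_⟩
  rw [toReal_eLpNorm hT.1, toReal_eLpNorm h0.1, toReal_eLpNorm h1.1]
  rw [abs_of_pos (by linarith : 0 < (σ + 1) / 2)] at hTnorm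
  set A := lpNorm (fun x => f x * (1 + x ^ 2) ^ ((σ + 1) / 2)) 2 volume
  set B := lpNorm (fun x => deriv f x * (1 + x ^ 2) ^ ((σ + 2) / 2)) 2 volume
  have hA : 0 ≤ A := lpNorm_nonneg
  have hB : 0 ≤ B := lpNorm_nonneg
  nlinarith [mul_nonneg hA hB, sq_nonneg B]
end
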